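/- Let φ = □ψ₁ ∧ ⋯ ∧ □ψ_k ∧ ◇ξ₁ ∧ ⋯ ∧ ◇ξ_m ∧ ℓ₁ ∧ ⋯ ∧ ℓ_s be a poor man's formula, where the ℓ_i are literals. Then φ is satisfiable with respect to F≥1 if and only if (1) for all i and j, ℓ_i is not the complement of ℓ_j, (2) for every j ∈ {1,…,m}, the formula ψ₁ ∧ ⋯ ∧ ψ_k ∧ ξ_j is satisfiable with respect to F≥1, and (3) the formula ψ₁ ∧ ⋯ ∧ ψ_k is satisfiable with respect to F≥1. -/

import Mathlib

namespace PoorMansModal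

/-- Modal formulas over propositional variables of type `α`: variables `p`,
negated variables `p̄`, general negation, conjunction, disjunction, box, diamond,
and the constants `true` and `false`. -/
inductive Fml (α : Type) : Type where
  | var : α → Fml α
  | nvar : α → Fml α
  | neg : Fml α → Fml α
  | and : Fml α → Fml α → Fml α
  | or : Fml α → Fml α → Fml α
  | box : Fml α → Fml α
  | dia : Fml α → Fml α
  | tru : Fml α
  | fls : Fml α

/-- A Kripke model: a nonempty set of worlds, an accessibility relation, and a valuation. -/
structure Kripke (α : Type) where
  World : Type
  nonempty : Nonempty World
  R : World → World → Prop
  V : α → World → Prop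

/-- Truth of a formula at a world of a model. -/
def Sat {α : Type} (M : Kripke α) : Fml α → M.World → Prop
  | .var p, w => M.V p w
  | .nvar p, w => ¬ M.V p w
  | .neg φ, w => ¬ Sat M φ w
  | .and φ ψ, w => Sat M φ w ∧ Sat M ψ w
  | .or φ ψ, w => Sat M φ w ∨ Sat M ψ w
  | .box φ, w => ∀ v, M.R w v → Sat M φ v
  | .dia φ, w => ∃ v, M.R w v ∧ Sat M φ v
  | .tru, _ => True
  | .fls, _ => False

/-- Modal depth: depth of nesting of `□` and `◇`. -/
def mdep {α : Type} : Fml α → ℕ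
  | .var _ => 0
  | .nvar _ => 0
  | .neg φ => mdep φ
  | .and φ ψ => max (mdep φ) (mdep ψ)
  | .or φ ψ => max (mdep φ) (mdep ψ)
  | .box φ => mdep φ + 1
  | .dia φ => mdep φ + 1
  | .tru => 0
  | .fls => 0

/-- Conjunction of a list of formulas; the empty conjunction is the always-true formula. -/
def bigConj {α : Type} : List (Fml α) → Fml α
  | [] => .tru
  | [φ] => φ
  | φ :: rest => .and φ (bigConj rest)

/-- `□^k φ`. -/
def boxI {α : Type} : ℕ → Fml α → Fml α
  | 0, φ => φ
  | k + 1, φ => .box (boxI k φ)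

/-- `◇^k φ`. -/
def diaI {α : Type} : ℕ → Fml α → Fml α
  | 0, φ => φ
  | k + 1, φ => .dia (diaI k φ)

/-- `(◇□)^k φ`. -/
def diaBoxI {α : Type} : ℕ → Fml α → Fml α
  | 0, φ => φ
  | k + 1, φ => .dia (.box (diaBoxI k φ))

/-- The literal with variable `l.1` and sign `l.2` (`true` = positive). -/
def litF {α : Type} (l : α × Bool) : Fml α := if l.2 then .var l.1 else .nvar l.1

/-- The variable `p` occurs in the formula. -/
def occursV {α : Type} (p : α) : Fml α → Prop
  | .var q => p = q
  | .nvar q => p = q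
  | .neg φ => occursV p φ
  | .and φ ψ => occursV p φ ∨ occursV p ψ
  | .or φ ψ => occursV p φ ∨ occursV p ψ
  | .box φ => occursV p φ
  | .dia φ => occursV p φ
  | .tru => False
  | .fls => False

/-- Poor man's formulas: built from literals, `∧`, `□`, `◇` only. -/
def PoorF {α : Type} : Fml α → Prop
  | .var _ => True
  | .nvar _ => True
  | .and φ ψ => PoorF φ ∧ PoorF ψ
  | .box φ => PoorF φ
  | .dia φ => PoorF φ
  | _ => False

/-- Formulas of the language `L`: built from literals, `∧`, `∨`, `□`, `◇`. -/
def InL {α : Type} : Fml α → Prop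
  | .var _ => True
  | .nvar _ => True
  | .and φ ψ => InL φ ∧ InL ψ
  | .or φ ψ => InL φ ∧ InL ψ
  | .box φ => InL φ
  | .dia φ => InL φ
  | _ => False

/-- Every world has at most one successor. -/
def AtMostOne {W : Type} (R : W → W → Prop) : Prop :=
  ∀ w v v', R w v → R w v' → v = v'

/-- Every world has at least one successor. -/
def AtLeastOne {W : Type} (R : W → W → Prop) : Prop :=
  ∀ w, ∃ v, R w v

/-- Every world has at most two successors. -/
def AtMostTwo {W : Type} (R : W → W → Prop) : Prop :=
  ∀ w v₁ v₂ v₃, R w v₁ → R w v₂ → R w v₃ → v₁ = v₂ ∨ v₁ = v₃ ∨ v₂ = v₃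

/-- `chainR R n w v`: there is an `R`-path of length exactly `n` from `w` to `v`. -/
def chainR {W : Type} (R : W → W → Prop) : ℕ → W → W → Prop
  | 0, w, v => w = v
  | k + 1, w, v => ∃ u, R w u ∧ chainR R k u v

/-- `R` is the parent-child relation of a rooted tree with root `root`
in which every node has at most two children. -/
structure IsBinTree {W : Type} (R : W → W → Prop) (root : W) : Prop where
  reach : ∀ w, Relation.ReflTransGen R root w
  root_no_parent : ∀ w, ¬ R w root
  unique_parent : ∀ w v v', R v w → R v' w → v = v'
  acyclic : ∀ w, ¬ Relation.TransGen R w w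
  at_most_two_children : ∀ w v₁ v₂ v₃, R w v₁ → R w v₂ → R w v₃ → v₁ = v₂ ∨ v₁ = v₃ ∨ v₂ = v₃

/-- `φ_exp = ⋀_{i=1}^n □^{i-1}(◇□^{n-i} p_i ∧ ◇□^{n-i} p̄_i)`, with `p_i = var i`. -/
def phiExp (n : ℕ) : Fml ℕ :=
  bigConj ((List.range n).map (fun j =>
    boxI j (.and (.dia (boxI (n - 1 - j) (.var (j + 1))))
                 (.dia (boxI (n - 1 - j) (.nvar (j + 1)))))))

/-- Satisfiability with respect to the class of all frames. -/
def SatAll (φ : Fml ℕ) : Prop := ∃ (M : Kripke ℕ) (w : M.World), Sat M φ w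

/-- Satisfiability with respect to `F≤1`. -/
def SatLe1 (φ : Fml ℕ) : Prop := ∃ M : Kripke ℕ, AtMostOne M.R ∧ ∃ w, Sat M φ w

/-- Satisfiability with respect to `F≥1`. -/
def SatGe1 (φ : Fml ℕ) : Prop := ∃ M : Kripke ℕ, AtLeastOne M.R ∧ ∃ w, Sat M φ w

/-- Satisfiability with respect to `F≤2`. -/
def SatLe2 (φ : Fml ℕ) : Prop := ∃ M : Kripke ℕ, AtMostTwo M.R ∧ ∃ w, Sat M φ w

/-- A one-world model with no successors, realizing the boolean assignment `v`;
truth at its world is propositional truth for formulas without modal operators. -/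
def propModel (v : ℕ → Bool) : Kripke ℕ :=
  { World := Unit, nonempty := ⟨()⟩, R := fun _ _ => False, V := fun p _ => v p = true }

/-- Propositional satisfaction of `φ` under the assignment `v`. -/
def PropSat (v : ℕ → Bool) (φ : Fml ℕ) : Prop := Sat (propModel v) φ ()

/-! Necessity is immediate: literals true at one world cannot clash, the successor witnessing
`◇ξ_j` satisfies `ψ₁ ∧ ⋯ ∧ ψ_k ∧ ξ_j`, and any successor (one exists by seriality) satisfies
`ψ₁ ∧ ⋯ ∧ ψ_k`. For sufficiency, put serial models of the formulas in (2) and (3) side by side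
under a new root whose successors are exactly their designated worlds, and make the literals
true at the root. Truth inside each component is unchanged, so the root satisfies every `□ψ_i`
and `◇ξ_j`; the model from (3) keeps the root serial even when there is no `ξ_j`. -/

variable {α : Type}

section BigConj

variable (M : Kripke α) (w : M.World)

theorem sat_bigConj (L : List (Fml α)) : Sat M (bigConj L) w ↔ ∀ φ ∈ L, Sat M φ w := by
  induction L with
  | nil => simp [bigConj, Sat]
  | cons φ rest ih =>
    cases rest with
    | nil => simp [bigConj]
    | cons ψ t => simp only [bigConj, Sat, ih, List.forall_mem_cons]

theorem sat_bigConj_append (L₁ L₂ : List (Fml α)) :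
    Sat M (bigConj (L₁ ++ L₂)) w ↔ Sat M (bigConj L₁) w ∧ Sat M (bigConj L₂) w := by
  simp only [sat_bigConj, List.forall_mem_append]

theorem sat_bigConj_map_box (L : List (Fml α)) :
    Sat M (bigConj (L.map .box)) w ↔ ∀ v, M.R w v → Sat M (bigConj L) v := by
  simp only [sat_bigConj, List.forall_mem_map, Sat]
  exact ⟨fun h v hv φ hφ => h φ hφ v hv, fun h φ hφ v hv => h v hv φ hφ⟩

theorem sat_bigConj_map_dia (L : List (Fml α)) :
    Sat M (bigConj (L.map .dia)) w ↔ ∀ φ ∈ L, ∃ v, M.R w v ∧ Sat M φ v := by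
  simp only [sat_bigConj, List.forall_mem_map, Sat]

theorem sat_litF (l : α × Bool) : Sat M (litF l) w ↔ (M.V l.1 w ↔ l.2 = true) := by
  rcases l with ⟨p, _ | _⟩ <;> simp [litF, Sat]

theorem sat_bigConj_map_litF (ls : List (α × Bool)) :
    Sat M (bigConj (ls.map litF)) w ↔ ∀ l ∈ ls, (M.V l.1 w ↔ l.2 = true) := by
  simp only [sat_bigConj, List.forall_mem_map, sat_litF]

end BigConj

theorem not_complementary_of_forall_val {V : α → Prop} {ls : List (α × Bool)}
    (h : ∀ l ∈ ls, (V l.1 ↔ l.2 = true)) :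
    ∀ l ∈ ls, ∀ l' ∈ ls, ¬ (l.1 = l'.1 ∧ l.2 = !l'.2) := by
  rintro ⟨p, b⟩ hl ⟨p', b'⟩ hl' ⟨hp, hb⟩
  simp only at hp hb
  subst hp hb
  have := (h _ hl).symm.trans (h (p, b') hl')
  cases b' <;> simp at this

theorem val_mem_iff_of_not_complementary {ls : List (α × Bool)}
    (h : ∀ l ∈ ls, ∀ l' ∈ ls, ¬ (l.1 = l'.1 ∧ l.2 = !l'.2)) :
    ∀ l ∈ ls, ((l.1, true) ∈ ls ↔ l.2 = true) := by
  rintro ⟨p, _ | _⟩ hl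
  · simpa using fun hpos : (p, true) ∈ ls => h _ hl _ hpos ⟨rfl, rfl⟩
  · simpa using hl

section RootedSum

variable {ι : Type} (M : ι → Kripke α) (w : ∀ i, (M i).World) (V₀ : α → Prop)

def rootedSum : Kripke α where
  World := Option ((i : ι) × (M i).World)
  nonempty := ⟨none⟩
  R
    | none, y => ∃ i, y = some ⟨i, w i⟩
    | some ⟨i, u⟩, y => ∃ v, (M i).R u v ∧ y = some ⟨i, v⟩
  V
    | p, none => V₀ p
    | p, some ⟨i, u⟩ => (M i).V p u

theorem sat_rootedSum_some (φ : Fml α) (i : ι) (u : (M i).World) :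
    Sat (rootedSum M w V₀) φ (some ⟨i, u⟩) ↔ Sat (M i) φ u := by
  induction φ generalizing u with
  | var p | nvar p => simp [Sat, rootedSum]
  | tru | fls => simp [Sat]
  | neg φ ih => simp only [Sat, ih]
  | and φ ψ ihφ ihψ | or φ ψ ihφ ihψ => simp only [Sat, ihφ, ihψ]
  | box φ ih =>
    constructor
    · exact fun h v hv => (ih v).mp (h _ ⟨v, hv, rfl⟩)
    · rintro h _ ⟨v, hv, rfl⟩
      exact (ih v).mpr (h v hv)
  | dia φ ih =>
    constructor
    · rintro ⟨_, ⟨v, hv, rfl⟩, hs⟩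
      exact ⟨v, hv, (ih v).mp hs⟩
    · rintro ⟨v, hv, hs⟩
      exact ⟨_, ⟨v, hv, rfl⟩, (ih v).mpr hs⟩

theorem atLeastOne_rootedSum [Nonempty ι] (hM : ∀ i, AtLeastOne (M i).R) :
    AtLeastOne (rootedSum M w V₀).R
  | none => ⟨_, Classical.arbitrary ι, rfl⟩
  | some ⟨i, u⟩ =>
    let ⟨v, hv⟩ := hM i u
    ⟨some ⟨i, v⟩, v, hv, rfl⟩

end RootedSum

theorem exists_root_of_forall_satGe1 {ι : Type} [Nonempty ι] (χ : ι → Fml ℕ)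
    (hχ : ∀ i, SatGe1 (χ i)) (V₀ : ℕ → Prop) :
    ∃ M : Kripke ℕ, AtLeastOne M.R ∧ ∃ r, (∀ p, M.V p r ↔ V₀ p) ∧
      (∀ v, M.R r v → ∃ i, Sat M (χ i) v) ∧ ∀ i, ∃ v, M.R r v ∧ Sat M (χ i) v := by
  choose M hM w hw using hχ
  refine ⟨rootedSum M w V₀, atLeastOne_rootedSum M w V₀ hM, none, fun _ => Iff.rfl, ?_,
    fun i => ⟨_, ⟨i, rfl⟩, (sat_rootedSum_some M w V₀ _ i _).mpr (hw i)⟩⟩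
  rintro _ ⟨i, rfl⟩
  exact ⟨i, (sat_rootedSum_some M w V₀ _ i _).mpr (hw i)⟩

theorem stmt6_general (ψs ξs : List (Fml ℕ)) (ls : List (ℕ × Bool)) :
    SatGe1 (bigConj (ψs.map .box ++ ξs.map .dia ++ ls.map litF)) ↔
      ((∀ l ∈ ls, ∀ l' ∈ ls, ¬ (l.1 = l'.1 ∧ l.2 = !l'.2)) ∧
        (∀ ξ ∈ ξs, SatGe1 (bigConj (ψs ++ [ξ]))) ∧
        SatGe1 (bigConj ψs)) := by
  simp only [SatGe1, sat_bigConj_append, sat_bigConj_map_box, sat_bigConj_map_dia,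
    sat_bigConj_map_litF]
  constructor
  · rintro ⟨M, hM, w, ⟨hbox, hdia⟩, hlit⟩
    refine ⟨not_complementary_of_forall_val (V := (M.V · w)) hlit, fun ξ hξ => ?_, ?_⟩
    · obtain ⟨v, hv, hξv⟩ := hdia ξ hξ
      exact ⟨M, hM, v, hbox v hv, hξv⟩
    · obtain ⟨v, hv⟩ := hM w
      exact ⟨M, hM, v, hbox v hv⟩
  · rintro ⟨hls, hξs, hψs⟩
    let χ : Option {ξ // ξ ∈ ξs} → Fml ℕ := fun i => bigConj (ψs ++ (i.map Subtype.val).toList)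
    have hχ : ∀ i, SatGe1 (χ i)
      | none => by simpa [χ, SatGe1] using hψs
      | some ⟨ξ, hξ⟩ => by simpa [χ, SatGe1, sat_bigConj_append] using hξs ξ hξ
    obtain ⟨M, hM, r, hV, hsucc, hreal⟩ :=
      exists_root_of_forall_satGe1 χ hχ (fun p => (p, true) ∈ ls)
    refine ⟨M, hM, r, ⟨fun v hv => ?_, fun ξ hξ => ?_⟩, ?_⟩
    · obtain ⟨i, hi⟩ := hsucc v hv
      exact ((sat_bigConj_append M v _ _).mp hi).1
    · obtain ⟨v, hv, hχv⟩ := hreal (some ⟨ξ, hξ⟩)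
      exact ⟨v, hv, (sat_bigConj M v _).mp hχv ξ (by simp)⟩
    · simpa only [hV] using val_mem_iff_of_not_complementary hls

/-- A poor man's formula
`φ = □ψ₁ ∧ ⋯ ∧ □ψ_k ∧ ◇ξ₁ ∧ ⋯ ∧ ◇ξ_m ∧ ℓ₁ ∧ ⋯ ∧ ℓ_s` is satisfiable with respect to
`F≥1` iff (1) no literal `ℓ_i` is the complement of a literal `ℓ_j`, (2) for every `j`,
`ψ₁ ∧ ⋯ ∧ ψ_k ∧ ξ_j` is satisfiable with respect to `F≥1`, and (3) `ψ₁ ∧ ⋯ ∧ ψ_k` is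
satisfiable with respect to `F≥1`. -/
theorem stmt6 (ψs ξs : List (Fml ℕ)) (ls : List (ℕ × Bool))
    (hψ : ∀ ψ ∈ ψs, PoorF ψ) (hξ : ∀ ξ ∈ ξs, PoorF ξ) :
    SatGe1 (bigConj (ψs.map .box ++ ξs.map .dia ++ ls.map litF)) ↔
      ((∀ l ∈ ls, ∀ l' ∈ ls, ¬ (l.1 = l'.1 ∧ l.2 = !l'.2)) ∧
        (∀ ξ ∈ ξs, SatGe1 (bigConj (ψs ++ [ξ]))) ∧
        SatGe1 (bigConj ψs)) :=
  stmt6_general ψs ξs ls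

end PoorMansModal
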